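/- The Fourier transform of the kernel w(x) = (48x(x²−15)cos x − 144(2x²−5)sin x)/(π x⁷) is φ_w(t) = (1−t²)³ for |t| ≤ 1 and 0 otherwise; equivalently, w(x) = (1/2π)∫_{−1}^{1} (1−t²)³ e^{−itx} dt. -/

import Mathlib

/-!
For a polynomial `p` and `c ≠ 0`, repeated integration by parts gives the primitive
`e^{ct} ∑ₖ (-1)ᵏ p⁽ᵏ⁾(t) / c^{k+1}` of `p(t) e^{ct}`. For `p = (1 - t²)³` the terms with `k < 3`
vanish at `t = ±1`, so the integral over `[-1, 1]` is a combination of `cosh c / cᵏ` and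
`sinh c / cᵏ`; at `c = -ix` these become `cos x` and `-i sin x`.
-/

open Real Complex intervalIntegral Polynomial Finset

noncomputable def cexpMulPolyPrimitive (p : ℂ[X]) (c : ℂ) (n : ℕ) (z : ℂ) : ℂ :=
  cexp (c * z) * ∑ k ∈ range n, (-1) ^ k * (derivative^[k] p).eval z / c ^ (k + 1)

theorem hasDerivAt_cexpMulPolyPrimitive {p : ℂ[X]} {c : ℂ} {n : ℕ} (hc : c ≠ 0)
    (hn : p.natDegree < n) (z : ℂ) :
    HasDerivAt (cexpMulPolyPrimitive p c n) (p.eval z * cexp (c * z)) z := by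
  have hexp : HasDerivAt (fun z => cexp (c * z)) (cexp (c * z) * c) z := by
    simpa using ((hasDerivAt_id z).const_mul c).cexp
  have hsum : HasDerivAt
      (fun z => ∑ k ∈ range n, (-1) ^ k * (derivative^[k] p).eval z / c ^ (k + 1))
      (∑ k ∈ range n, (-1) ^ k * (derivative^[k + 1] p).eval z / c ^ (k + 1)) z := by
    refine HasDerivAt.fun_sum fun k _ => ?_
    rw [Function.iterate_succ_apply']
    exact (((derivative^[k] p).hasDerivAt z).const_mul _).div_const _
  have htelescope : c * ∑ k ∈ range n, (-1) ^ k * (derivative^[k] p).eval z / c ^ (k + 1)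
      + ∑ k ∈ range n, (-1) ^ k * (derivative^[k + 1] p).eval z / c ^ (k + 1) = p.eval z := by
    have h := sum_range_sub' (fun k => (-1) ^ k * (derivative^[k] p).eval z / c ^ k) n
    simp only [iterate_derivative_eq_zero hn, eval_zero, mul_zero, zero_div, sub_zero,
      pow_zero, one_mul, div_one, Function.iterate_zero, id] at h
    rw [← h, mul_sum, ← sum_add_distrib]
    refine sum_congr rfl fun k _ => ?_
    field_simp
    ring
  refine (hexp.mul hsum).congr_deriv ?_
  linear_combination cexp (c * z) * htelescope

theorem integral_eval_mul_cexp {p : ℂ[X]} {c : ℂ} {n : ℕ} (hc : c ≠ 0)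
    (hn : p.natDegree < n) (a b : ℝ) :
    ∫ t in a..b, p.eval (t : ℂ) * cexp (c * t) =
      cexpMulPolyPrimitive p c n b - cexpMulPolyPrimitive p c n a :=
  integral_eq_sub_of_hasDerivAt
    (fun t _ => (hasDerivAt_cexpMulPolyPrimitive hc hn t).comp_ofReal)
    ((by fun_prop : Continuous fun t : ℝ => p.eval (t : ℂ) * cexp (c * t)).intervalIntegrable _ _)

theorem cexpMulPolyPrimitive_one_sub_X_sq_pow_three {c z : ℂ} (hz : z = 1 ∨ z = -1) :
    cexpMulPolyPrimitive ((1 - X ^ 2) ^ 3) c 7 z =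
      cexp (c * z) * (48 * z / c ^ 4 - 288 / c ^ 5 + 720 * z / c ^ 6 - 720 / c ^ 7) := by
  have hp : ((1 - X ^ 2) ^ 3 : ℂ[X]) = 1 - 3 * X ^ 2 + 3 * X ^ 4 - X ^ 6 := by ring
  rw [cexpMulPolyPrimitive, hp]
  rcases hz with rfl | rfl <;>
  simp only [sum_range_succ, sum_range_zero, Function.iterate_succ_apply',
    Function.iterate_zero_apply, derivative_mul, derivative_sub, derivative_add, derivative_X_pow,
    derivative_ofNat, derivative_one, derivative_C, eval_add, eval_sub, eval_mul, eval_pow, eval_X,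
    eval_C, eval_one, eval_ofNat, eval_zero] <;> norm_num <;> ring

theorem integral_one_sub_sq_pow_three_mul_cexp {c : ℂ} (hc : c ≠ 0) :
    ∫ t in (-1 : ℝ)..1, (1 - (t : ℂ) ^ 2) ^ 3 * cexp (c * t) =
      96 * Complex.cosh c / c ^ 4 - 576 * Complex.sinh c / c ^ 5
        + 1440 * Complex.cosh c / c ^ 6 - 1440 * Complex.sinh c / c ^ 7 := by
  have hdeg : ((1 - X ^ 2) ^ 3 : ℂ[X]).natDegree < 7 := by compute_degree!
  have h := integral_eval_mul_cexp hc hdeg (-1) 1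
  simp only [eval_pow, eval_sub, eval_one, eval_X] at h
  rw [h, cexpMulPolyPrimitive_one_sub_X_sq_pow_three (by norm_num),
    cexpMulPolyPrimitive_one_sub_X_sq_pow_three (by norm_num), Complex.cosh, Complex.sinh]
  simp only [ofReal_one, ofReal_neg, mul_one, mul_neg]
  ring

/-- The kernel `w(x) = (48x(x²−15)cos x − 144(2x²−5)sin x)/(π x⁷)` is the inverse
Fourier transform of `t ↦ (1−t²)³ 1_{[−1,1]}(t)`:
`w(x) = (1/2π) ∫_{−1}^{1} (1−t²)³ e^{−itx} dt` for `x ≠ 0`. -/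
theorem wand_kernel_fourier_inversion (x : ℝ) (hx : x ≠ 0) :
    ((48 * x * (x ^ 2 - 15) * Real.cos x - 144 * (2 * x ^ 2 - 5) * Real.sin x) /
        (Real.pi * x ^ 7) : ℂ) =
      (1 / (2 * Real.pi)) *
        ∫ t in (-1 : ℝ)..1, ((1 - t ^ 2) ^ 3 : ℂ) * Complex.exp (-Complex.I * t * x) := by
  have hc : -x * I ≠ 0 := by simpa using hx
  simp_rw [show ∀ t : ℝ, -I * t * x = -x * I * t by intro t; ring]
  rw [integral_one_sub_sq_pow_three_mul_cexp hc, cosh_mul_I, sinh_mul_I, Complex.cos_neg,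
    Complex.sin_neg]
  push_cast
  field_simp
  ring_nf
  rw [I_sq, show I ^ 6 = -1 by rw [I_pow_eq_pow_mod]; norm_num]
  ring
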